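/- Let I = [a,b] and let c, τ : I → ℝ be continuous with c(t) < 0 and τ(t) > 0 for all t ∈ I, such that η : I → ℝ, η(t) = t − τ(t), is strictly increasing on I. Let J = η(I) ∪ I and let y : J → ℝ be continuous, continuously differentiable on I, satisfy y′(t) = c(t)·y(η(t)) for all t ∈ I, and suppose that for every t ∈ I the restriction of y to [η(t), t] is not identically zero. Let k ≥ 4 be an integer and suppose there exist points α₁, …, α_k in [a,b] with η(α_j) = α_{j−1} for j = 2, …, k. Then for every t ∈ [α₄, b] with V(y,[η(t), t]) = V(y,[η⁴(t), η³(t)]) < ∞ (where ηᵐ denotes the m-th iterate of η), the restriction of y to [η(t), t] belongs to H_{[η(t), t]}. -/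
import Mathlib

open Set

/-- The set of integers `k ≥ 1` such that `φ` has `k` sign changes witnessed by
points `s⁰ < s¹ < ⋯ < sᵏ` in `[a,b]` with `φ(sⁱ⁻¹)·φ(sⁱ) < 0`. -/
def scSet (φ : ℝ → ℝ) (a b : ℝ) : Set ℕ :=
  {k | 1 ≤ k ∧ ∃ s : ℕ → ℝ, (∀ i, i ≤ k → s i ∈ Set.Icc a b) ∧
    (∀ i, i < k → s i < s (i + 1)) ∧
    (∀ i, 1 ≤ i → i ≤ k → φ (s (i - 1)) * φ (s i) < 0)}

open Classical in
/-- The sign-change counting function `sc(φ,[a,b])` with values in `ℕ∞`. -/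
noncomputable def sc (φ : ℝ → ℝ) (a b : ℝ) : ℕ∞ :=
  if (∀ s ∈ Set.Icc a b, 0 ≤ φ s) ∨ (∀ s ∈ Set.Icc a b, φ s ≤ 0) then 0
  else sSup ((fun n : ℕ => (n : ℕ∞)) '' scSet φ a b)

open Classical in
/-- The discrete Lyapunov function `V(φ,[a,b])`: equals `sc(φ,[a,b])` if the latter
is odd or infinite, and `sc(φ,[a,b]) + 1` otherwise. -/
noncomputable def V (φ : ℝ → ℝ) (a b : ℝ) : ℕ∞ :=
  if ∃ n : ℕ, sc φ a b = (n : ℕ∞) ∧ Even n then sc φ a b + 1 else sc φ a b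

/-- Membership in the regularity class `H_{[a,b]}` for a `C¹` function `φ` with
derivative `φ'`: boundary nondegeneracy and all zeros simple. -/
def Hmem (φ φ' : ℝ → ℝ) (a b : ℝ) : Prop :=
  (φ b ≠ 0 ∨ φ a * φ' b < 0) ∧ (φ a ≠ 0 ∨ φ' a * φ b > 0) ∧
  ∀ s ∈ Set.Icc a b, φ s = 0 → φ' s ≠ 0

/-! ### Sign helper lemmas -/

private lemma sgn1 {A u B v : ℝ} (h1 : 0 < A * u) (h2 : 0 < B * v) (h3 : u * v < 0) :
    A * B < 0 := by
  nlinarith [mul_pos h1 h2]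

private lemma sgn3 {A u B : ℝ} (h1 : 0 < A * u) (h2 : A * B < 0) : 0 < B * (-u) := by
  by_contra h
  push_neg at h
  have h' : 0 ≤ B * u := by nlinarith
  nlinarith [mul_pos h1 (neg_pos.2 h2), mul_nonneg (mul_self_nonneg A) h']

private lemma sgn2 {A u B v : ℝ} (h1 : 0 < A * u) (h2 : 0 < B * v) (h3 : 0 < u * v) :
    0 < A * B := by
  nlinarith [mul_pos h1 h2]

private lemma neg_one_sq_pow (j : ℕ) : ((-1:ℝ)^j) * ((-1:ℝ)^j) = 1 := by
  rw [← pow_add]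
  exact Even.neg_one_pow ⟨j, rfl⟩

/-! ### Alternating chains -/

/-- An alternating chain for `φ` on `[p,q]` with `k+1` points and sign pattern
starting with sign `σ`. -/
def Pat (φ : ℝ → ℝ) (p q σ : ℝ) (k : ℕ) (s : ℕ → ℝ) : Prop :=
  (∀ i, i ≤ k → s i ∈ Set.Icc p q) ∧ (∀ i, i < k → s i < s (i + 1)) ∧
  (∀ i, i ≤ k → 0 < φ (s i) * (σ * (-1)^i))

lemma Pat.mem {φ : ℝ → ℝ} {p q σ : ℝ} {k : ℕ} {s : ℕ → ℝ} (h : Pat φ p q σ k s) :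
    ∀ i, i ≤ k → s i ∈ Set.Icc p q := h.1

lemma Pat.mono {φ : ℝ → ℝ} {p q σ : ℝ} {k : ℕ} {s : ℕ → ℝ} (h : Pat φ p q σ k s) :
    ∀ i, i < k → s i < s (i + 1) := h.2.1

lemma Pat.sign {φ : ℝ → ℝ} {p q σ : ℝ} {k : ℕ} {s : ℕ → ℝ} (h : Pat φ p q σ k s) :
    ∀ i, i ≤ k → 0 < φ (s i) * (σ * (-1)^i) := h.2.2

lemma Pat.restrict {φ : ℝ → ℝ} {p q σ : ℝ} {k j : ℕ} {s : ℕ → ℝ}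
    (h : Pat φ p q σ k s) (hj : j ≤ k) : Pat φ p q σ j s :=
  ⟨fun i hi => h.1 i (hi.trans hj), fun i hi => h.2.1 i (lt_of_lt_of_le hi hj),
   fun i hi => h.2.2 i (hi.trans hj)⟩

lemma Pat.subset {φ : ℝ → ℝ} {p q p' q' σ : ℝ} {k : ℕ} {s : ℕ → ℝ}
    (h : Pat φ p q σ k s) (h1 : p' ≤ p) (h2 : q ≤ q') : Pat φ p' q' σ k s :=
  ⟨fun i hi => Icc_subset_Icc h1 h2 (h.1 i hi), h.2.1, h.2.2⟩

lemma Pat.shift {φ : ℝ → ℝ} {p q σ : ℝ} {k j : ℕ} {s : ℕ → ℝ}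
    (h : Pat φ p q σ k s) (hj : j ≤ k) :
    Pat φ p q (σ * (-1)^j) (k - j) (fun i => s (i + j)) := by
  refine ⟨fun i hi => h.1 (i + j) (by omega), ?_, ?_⟩
  · intro i hi
    have := h.2.1 (i + j) (by omega)
    simpa [show i + 1 + j = i + j + 1 from by omega] using this
  · intro i hi
    have := h.2.2 (i + j) (by omega)
    calc (0:ℝ) < φ (s (i + j)) * (σ * (-1)^(i+j)) := this
      _ = φ (s (i+j)) * (σ * (-1)^j * (-1)^i) := by rw [pow_add]; ring

lemma pat_single {φ : ℝ → ℝ} {p q σ x : ℝ} (hx : x ∈ Set.Icc p q) (hs : 0 < φ x * σ) :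
    Pat φ p q σ 0 (fun _ => x) := by
  refine ⟨fun i _ => hx, fun i hi => by omega, fun i hi => ?_⟩
  interval_cases i
  simpa using hs

/-- concatenation of two chains -/
def patAppend (m : ℕ) (f g : ℕ → ℝ) : ℕ → ℝ := fun i => if i ≤ m then f i else g (i - (m+1))

lemma pat_concat {φ : ℝ → ℝ} {p q σ σ' : ℝ} {m n : ℕ} {f g : ℕ → ℝ}
    (hf : Pat φ p q σ m f) (hg : Pat φ p q σ' n g)
    (hσ' : σ' = σ * (-1)^(m+1)) (hlt : f m < g 0) :
    Pat φ p q σ (m + n + 1) (patAppend m f g) := by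
  refine ⟨?_, ?_, ?_⟩
  · intro i hi
    unfold patAppend
    split_ifs with h
    · exact hf.1 i h
    · exact hg.1 (i - (m+1)) (by omega)
  · intro i hi
    unfold patAppend
    split_ifs with h1 h2
    · exact hf.2.1 i (by omega)
    · have : i = m := by omega
      subst this
      simpa using hlt
    · omega
    · have h3 : i - (m+1) < n := by omega
      have h4 : i + 1 - (m+1) = (i - (m+1)) + 1 := by omega
      rw [h4]
      exact hg.2.1 _ h3
  · intro i hi
    unfold patAppend
    split_ifs with h
    · exact hf.2.2 i h
    · obtain ⟨j, rfl⟩ : ∃ j, i = m + 1 + j := ⟨i - (m+1), by omega⟩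
      have hidx : m + 1 + j - (m+1) = j := by omega
      rw [hidx]
      have := hg.2.2 j (by omega)
      rw [hσ'] at this
      calc (0:ℝ) < φ (g j) * (σ * (-1)^(m+1) * (-1)^j) := this
        _ = φ (g j) * (σ * (-1)^(m+1+j)) := by rw [pow_add]; ring

lemma pat_mem_scSet {φ : ℝ → ℝ} {p q σ : ℝ} {k : ℕ} {s : ℕ → ℝ}
    (h : Pat φ p q σ k s) (hk : 1 ≤ k) : k ∈ scSet φ p q := by
  refine ⟨hk, s, h.1, h.2.1, ?_⟩
  intro i hi1 hik
  obtain ⟨j, rfl⟩ : ∃ j, i = j + 1 := ⟨i - 1, by omega⟩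
  have h1 := h.2.2 j (by omega)
  have h2 := h.2.2 (j+1) hik
  have : (j + 1) - 1 = j := by omega
  rw [this]
  refine sgn1 h1 h2 ?_
  have : σ * (-1)^j * (σ * (-1)^(j+1)) = -(σ * σ) * ((-1:ℝ)^j * (-1)^j) := by
    rw [pow_succ]; ring
  rw [this, neg_one_sq_pow]
  have hσ : σ ≠ 0 := by
    intro h0
    rw [h0] at h1
    simp at h1
  have : 0 < σ * σ := mul_self_pos.2 hσ
  nlinarith

lemma scSet_to_pat {φ : ℝ → ℝ} {p q : ℝ} {k : ℕ} (h : k ∈ scSet φ p q) (hk : 1 ≤ k) :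
    ∃ σ s, (σ = 1 ∨ σ = -1) ∧ Pat φ p q σ k s := by
  obtain ⟨-, s, hmem, hmono, hsign⟩ := h
  have hadj : ∀ i, i < k → φ (s i) * φ (s (i+1)) < 0 := by
    intro i hi
    have := hsign (i+1) (by omega) (by omega)
    simpa using this
  have h0 : φ (s 0) ≠ 0 := by
    intro h0
    have := hadj 0 (by omega)
    rw [h0] at this
    simp at this
  refine ⟨if 0 < φ (s 0) then 1 else -1, s, by split_ifs <;> simp, ?_, ?_, ?_⟩
  · exact hmem
  · exact hmono
  · intro i hi
    induction i with
    | zero =>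
      split_ifs with hpos
      · simpa using hpos
      · have : φ (s 0) < 0 := lt_of_le_of_ne (not_lt.1 hpos) h0
        simpa using this
    | succ j ih =>
      have hj := ih (by omega)
      have := sgn3 hj (hadj j (by omega))
      calc (0:ℝ) < φ (s (j+1)) * (-((if 0 < φ (s 0) then (1:ℝ) else -1) * (-1)^j)) := this
        _ = φ (s (j+1)) * ((if 0 < φ (s 0) then (1:ℝ) else -1) * (-1)^(j+1)) := by
            rw [pow_succ]; ring

lemma scSet_down {φ : ℝ → ℝ} {p q : ℝ} {k j : ℕ} (h : k ∈ scSet φ p q)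
    (hj1 : 1 ≤ j) (hjk : j ≤ k) : j ∈ scSet φ p q := by
  obtain ⟨hk1, s, hmem, hmono, hsign⟩ := h
  exact ⟨hj1, s, fun i hi => hmem i (hi.trans hjk), fun i hi => hmono i (lt_of_lt_of_le hi hjk),
    fun i hi1 hi2 => hsign i hi1 (hi2.trans hjk)⟩

/-! ### sc and V lemmas -/

lemma mem_sc_le {φ : ℝ → ℝ} {p q : ℝ} {n : ℕ} (h : n ∈ scSet φ p q) :
    (n : ℕ∞) ≤ sc φ p q := by
  unfold sc
  split_ifs with hb
  · exfalso
    obtain ⟨h1, s, hmem, hmono, hsign⟩ := h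
    have hs := hsign 1 le_rfl h1
    simp only [Nat.sub_self] at hs
    have hm0 := hmem 0 (by omega)
    have hm1 := hmem 1 h1
    rcases hb with hb | hb
    · nlinarith [hb _ hm0, hb _ hm1]
    · nlinarith [hb _ hm0, hb _ hm1]
  · exact le_sSup ⟨n, h, rfl⟩

lemma sc_eq_max {φ : ℝ → ℝ} {p q : ℝ} {k : ℕ} (hsc : sc φ p q = (k:ℕ∞)) (hk : 1 ≤ k) :
    k ∈ scSet φ p q := by
  unfold sc at hsc
  split_ifs at hsc with hb
  · exfalso
    have : (k:ℕ∞) = 0 := hsc.symm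
    simp only [Nat.cast_eq_zero] at this
    omega
  · by_contra hnot
    have hub : sSup ((fun n : ℕ => (n : ℕ∞)) '' scSet φ p q) ≤ ((k-1 : ℕ) : ℕ∞) := by
      apply sSup_le
      rintro x ⟨n, hn, rfl⟩
      have h1 : (n : ℕ∞) ≤ (k : ℕ∞) := by
        rw [← hsc]; exact le_sSup ⟨n, hn, rfl⟩
      have h2 : n ≤ k := by exact_mod_cast h1
      have h3 : n ≠ k := fun h => hnot (h ▸ hn)
      exact Nat.cast_le.mpr (by omega : n ≤ k - 1)
    rw [hsc] at hub
    have : k ≤ k - 1 := Nat.cast_le.mp hub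
    omega

lemma sc_succ_notMem {φ : ℝ → ℝ} {p q : ℝ} {k : ℕ} (hsc : sc φ p q = (k:ℕ∞)) :
    (k+1) ∉ scSet φ p q := by
  intro h
  have := mem_sc_le h
  rw [hsc] at this
  have : k + 1 ≤ k := Nat.cast_le.mp this
  omega

lemma sc_zero_onesigned {φ : ℝ → ℝ} {p q : ℝ} (hsc : sc φ p q = 0) :
    (∀ x ∈ Set.Icc p q, 0 ≤ φ x) ∨ (∀ x ∈ Set.Icc p q, φ x ≤ 0) := by
  by_contra hb
  push_neg at hb
  obtain ⟨⟨x1, hx1, hx1n⟩, x2, hx2, hx2p⟩ := hb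
  have hne : x1 ≠ x2 := by rintro rfl; linarith
  have h1 : 1 ∈ scSet φ p q := by
    rcases hne.lt_or_gt with h | h
    · refine ⟨le_rfl, fun i => if i = 0 then x1 else x2, ?_, ?_, ?_⟩
      · intro i _; dsimp only; split_ifs <;> assumption
      · intro i hi; interval_cases i; simpa using h
      · intro i hi1 hi2; interval_cases i; simp; nlinarith
    · refine ⟨le_rfl, fun i => if i = 0 then x2 else x1, ?_, ?_, ?_⟩
      · intro i _; dsimp only; split_ifs <;> assumption
      · intro i hi; interval_cases i; simpa using h
      · intro i hi1 hi2; interval_cases i; simp; nlinarith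
  have := mem_sc_le h1
  rw [hsc] at this
  simp at this

lemma sc_unbounded {φ : ℝ → ℝ} {p q : ℝ} (hsc : sc φ p q = ⊤) (N : ℕ) :
    ∃ k ∈ scSet φ p q, N ≤ k := by
  by_contra hb
  push_neg at hb
  unfold sc at hsc
  split_ifs at hsc with h
  · simp at hsc
  · have hub : sSup ((fun n : ℕ => (n : ℕ∞)) '' scSet φ p q) ≤ (N : ℕ∞) := by
      apply sSup_le
      rintro x ⟨n, hn, rfl⟩
      exact Nat.cast_le.mpr (hb n hn).le
    rw [hsc] at hub
    exact WithTop.coe_ne_top (top_le_iff.1 hub)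

lemma V_ge_sc (φ : ℝ → ℝ) (p q : ℝ) : sc φ p q ≤ V φ p q := by
  unfold V
  split_ifs
  · exact le_self_add
  · exact le_rfl

lemma V_parity {φ : ℝ → ℝ} {p q : ℝ} {v : ℕ} (hV : V φ p q = (v:ℕ∞)) : Odd v := by
  unfold V at hV
  split_ifs at hV with hb
  · obtain ⟨n, hn, he⟩ := hb
    rw [hn] at hV
    have h1 : ((n+1:ℕ):ℕ∞) = (v:ℕ∞) := by push_cast; exact hV
    have h2 : n + 1 = v := Nat.cast_inj.mp h1
    rw [← h2]
    exact he.add_one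
  · push_neg at hb
    exact Nat.not_even_iff_odd.mp (hb v hV)

lemma V_cases {φ : ℝ → ℝ} {p q : ℝ} {v : ℕ} (hV : V φ p q = (v:ℕ∞)) :
    sc φ p q = (v:ℕ∞) ∨ (1 ≤ v ∧ sc φ p q = ((v-1 : ℕ):ℕ∞)) := by
  unfold V at hV
  split_ifs at hV with hb
  · obtain ⟨n, hn, he⟩ := hb
    rw [hn] at hV
    have h1 : ((n+1:ℕ):ℕ∞) = (v:ℕ∞) := by push_cast; exact hV
    have h2 : n + 1 = v := Nat.cast_inj.mp h1
    right
    constructor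
    · omega
    · rw [hn]; congr 1; omega
  · exact Or.inl hV

lemma V_ge_one (φ : ℝ → ℝ) (p q : ℝ) : (1:ℕ∞) ≤ V φ p q := by
  unfold V
  split_ifs with hb
  · exact le_add_self
  · push_neg at hb
    have := hb 0
    simp only [Nat.cast_zero, Even.zero] at this
    have h0 : sc φ p q ≠ 0 := fun h => (this h) trivial
    exact ENat.one_le_iff_ne_zero.2 h0

lemma V_of_sc_ge {φ : ℝ → ℝ} {p q : ℝ} {v : ℕ} (hv : Odd v)
    (h : ((v-1 : ℕ):ℕ∞) ≤ sc φ p q) : (v:ℕ∞) ≤ V φ p q := by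
  rcases eq_or_ne (sc φ p q) ⊤ with htop | hne
  · have hVt : V φ p q = ⊤ := by
      unfold V
      split_ifs with hb
      · obtain ⟨n, hn, -⟩ := hb
        rw [hn] at htop
        exact absurd htop (WithTop.coe_ne_top)
      · exact htop
    rw [hVt]; exact le_top
  · obtain ⟨n, hn⟩ := WithTop.ne_top_iff_exists.1 hne
    rw [← hn] at h
    have hnv : v - 1 ≤ n := Nat.cast_le.mp h
    rcases Nat.lt_or_ge n v with hlt | hge
    · have hveq : v = n + 1 := by
        have := hv.pos
        omega
      have heven : Even n := by
        rcases hv with ⟨m, hm⟩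
        exact ⟨m, by omega⟩
      subst hveq
      unfold V
      have hb : ∃ m : ℕ, sc φ p q = (m:ℕ∞) ∧ Even m := ⟨n, hn.symm, heven⟩
      rw [if_pos hb, ← hn]
      push_cast
      exact le_rfl
    · calc (v:ℕ∞) ≤ (n:ℕ∞) := Nat.cast_le.mpr hge
        _ = sc φ p q := hn
        _ ≤ V φ p q := V_ge_sc φ p q

lemma pat_le {φ : ℝ → ℝ} {p q σ : ℝ} {k : ℕ} {s : ℕ → ℝ} (h : Pat φ p q σ k s) :
    ∀ j, j ≤ k → ∀ i, i ≤ j → s i ≤ s j := by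
  intro j
  induction j with
  | zero =>
    intro _ i hi
    have h0 : i = 0 := by omega
    rw [h0]
  | succ n ih =>
    intro hn i hi
    rcases Nat.lt_or_ge i (n+1) with h1 | h2
    · exact le_trans (ih (by omega) i (by omega)) (le_of_lt (h.2.1 n (by omega)))
    · have : i = n + 1 := by omega
      subst this; exact le_rfl

lemma pat_band_left {φ : ℝ → ℝ} {p q σ : ℝ} {k : ℕ} {s : ℕ → ℝ}
    (h : Pat φ p q σ k s) (hnot : (k+1) ∉ scSet φ p q) :
    ∀ x ∈ Set.Icc p (s 0), 0 ≤ φ x * σ := by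
  intro x hx
  by_contra hcon
  push_neg at hcon
  have hs0 : 0 < φ (s 0) * σ := by simpa using h.2.2 0 (by omega)
  have hxlt : x < s 0 := by
    rcases lt_or_eq_of_le hx.2 with h1 | h1
    · exact h1
    · exfalso; rw [h1] at hcon; linarith
  have hxm : x ∈ Set.Icc p q := ⟨hx.1, le_trans hx.2 ((h.1 0 (by omega)).2)⟩
  have hpt : Pat φ p q (-σ) 0 (fun _ => x) := pat_single hxm (by linarith)
  have hnew := pat_concat hpt h (by rw [pow_one]; ring) (by simpa using hxlt)
  have : 0 + k + 1 = k + 1 := by omega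
  rw [this] at hnew
  exact hnot (pat_mem_scSet hnew (by omega))

lemma pat_band_right {φ : ℝ → ℝ} {p q σ : ℝ} {k : ℕ} {s : ℕ → ℝ}
    (h : Pat φ p q σ k s) (hnot : (k+1) ∉ scSet φ p q) :
    ∀ x ∈ Set.Icc (s k) q, 0 ≤ φ x * (σ * (-1)^k) := by
  intro x hx
  by_contra hcon
  push_neg at hcon
  have hsk : 0 < φ (s k) * (σ * (-1)^k) := h.2.2 k le_rfl
  have hxlt : s k < x := by
    rcases lt_or_eq_of_le hx.1 with h1 | h1
    · exact h1
    · exfalso; rw [← h1] at hcon; linarith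
  have hxm : x ∈ Set.Icc p q := ⟨le_trans ((h.1 k le_rfl).1) hx.1, hx.2⟩
  have hpt : Pat φ p q (σ * (-1)^(k+1)) 0 (fun _ => x) := by
    apply pat_single hxm
    have e : σ * (-1:ℝ)^(k+1) = -(σ * (-1)^k) := by rw [pow_succ]; ring
    rw [e]; linarith
  have hnew := pat_concat h hpt rfl hxlt
  have : k + 0 + 1 = k + 1 := by omega
  rw [this] at hnew
  exact hnot (pat_mem_scSet hnew (by omega))

lemma V_eq_top_iff {φ : ℝ → ℝ} {p q : ℝ} : V φ p q = ⊤ ↔ sc φ p q = ⊤ := by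
  unfold V
  split_ifs with hb
  · obtain ⟨n, hn, -⟩ := hb
    rw [hn]
    constructor
    · intro h
      exfalso
      have : ((n+1:ℕ):ℕ∞) = ⊤ := by push_cast; exact h
      exact WithTop.coe_ne_top this
    · intro h; exact absurd h (WithTop.coe_ne_top)
  · exact Iff.rfl

set_option maxHeartbeats 10000000 in
/-- Regularity at constancy of `V`: if `V(y,[η(t),t]) = V(y,[η⁴(t),η³(t)]) < ∞` for
some `t ∈ [α₄, b]`, then `y|_{[η(t),t]}` belongs to `H_{[η(t),t]}`. -/
theorem Hmem_of_V_constant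
    (a b : ℝ) (hab : a ≤ b)
    (c τ : ℝ → ℝ)
    (hc_cont : ContinuousOn c (Set.Icc a b)) (hτ_cont : ContinuousOn τ (Set.Icc a b))
    (hc_neg : ∀ t ∈ Set.Icc a b, c t < 0) (hτ_pos : ∀ t ∈ Set.Icc a b, 0 < τ t)
    (η : ℝ → ℝ) (hη_def : ∀ t, η t = t - τ t)
    (hη_mono : StrictMonoOn η (Set.Icc a b))
    (y y' : ℝ → ℝ)
    (hy_cont : ContinuousOn y (η '' Set.Icc a b ∪ Set.Icc a b))
    (hy_deriv : ∀ t ∈ Set.Icc a b, HasDerivWithinAt y (y' t) (Set.Icc a b) t)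
    (hy'_cont : ContinuousOn y' (Set.Icc a b))
    (hy_ode : ∀ t ∈ Set.Icc a b, y' t = c t * y (η t))
    (hy_ne : ∀ t ∈ Set.Icc a b, ∃ s ∈ Set.Icc (η t) t, y s ≠ 0)
    (k : ℕ) (hk : 4 ≤ k)
    (α : ℕ → ℝ)
    (hα_mem : ∀ j, 1 ≤ j → j ≤ k → α j ∈ Set.Icc a b)
    (hα_chain : ∀ j, 2 ≤ j → j ≤ k → η (α j) = α (j - 1)) :
    ∀ t ∈ Set.Icc (α 4) b,
      V y (η t) t = V y (η^[4] t) (η^[3] t) → V y (η t) t ≠ ⊤ →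
      Hmem y y' (η t) t := by
  intro t ht hVeq0 hVfin
  classical
  obtain ⟨htα, htb⟩ := ht
  have hα4 := hα_mem 4 (by omega) (by omega)
  have hα3 := hα_mem 3 (by omega) (by omega)
  have hα2 := hα_mem 2 (by omega) (by omega)
  have hα1 := hα_mem 1 (by omega) (by omega)
  have hch4 : η (α 4) = α 3 := by
    have h := hα_chain 4 (by omega) (by omega); norm_num at h; exact h
  have hch3 : η (α 3) = α 2 := by
    have h := hα_chain 3 (by omega) (by omega); norm_num at h; exact h
  have hch2 : η (α 2) = α 1 := by
    have h := hα_chain 2 (by omega) (by omega); norm_num at h; exact h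
  have hηlt : ∀ x ∈ Set.Icc a b, η x < x := by
    intro x hx; rw [hη_def x]; have := hτ_pos x hx; linarith
  have hmono := hη_mono.monotoneOn
  have htab : t ∈ Set.Icc a b := ⟨le_trans hα4.1 htα, htb⟩
  -- the points t1 = η t, t2 = η² t, t3 = η³ t, t4 = η⁴ t
  set t1 := η t with ht1def
  set t2 := η t1 with ht2def
  set t3 := η t2 with ht3def
  set t4 := η t3 with ht4def
  have hα3t1 : α 3 ≤ t1 := by
    rw [← hch4]; exact hmono hα4 htab htα
  have ht1m : t1 ∈ Set.Icc a b :=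
    ⟨le_trans hα3.1 hα3t1, le_trans (le_of_lt (hηlt t htab)) htb⟩
  have hα2t2 : α 2 ≤ t2 := by
    rw [← hch3]; exact hmono hα3 ht1m hα3t1
  have ht2m : t2 ∈ Set.Icc a b :=
    ⟨le_trans hα2.1 hα2t2, le_trans (le_of_lt (hηlt t1 ht1m)) ht1m.2⟩
  have hα1t3 : α 1 ≤ t3 := by
    rw [← hch2]; exact hmono hα2 ht2m hα2t2
  have ht3m : t3 ∈ Set.Icc a b :=
    ⟨le_trans hα1.1 hα1t3, le_trans (le_of_lt (hηlt t2 ht2m)) ht2m.2⟩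
  have ht01 : t1 < t := hηlt t htab
  have ht12 : t2 < t1 := hηlt t1 ht1m
  have ht23 : t3 < t2 := hηlt t2 ht2m
  have ht34 : t4 < t3 := hηlt t3 ht3m
  have hat2 : a < t2 := by
    have h1 : α 1 < α 2 := by rw [← hch2]; exact hηlt (α 2) hα2
    linarith [hα1.1, hα2t2]
  have hat1 : a < t1 := lt_trans hat2 ht12
  -- iterate identities
  have hit3 : η^[3] t = t3 := rfl
  have hit4 : η^[4] t = t4 := rfl
  rw [hit3, hit4] at hVeq0
  -- hVeq0 : V y t1 t = V y t4 t3
  ------------------------------------------------------------------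
  -- Analysis lemmas
  ------------------------------------------------------------------
  -- derivative at interior points
  have hDA : ∀ u, u ∈ Set.Ioo a b → HasDerivAt y (y' u) u := by
    intro u hu
    exact (hy_deriv u (Set.Ioo_subset_Icc_self hu)).hasDerivAt (Icc_mem_nhds hu.1 hu.2)
  -- sign of y ∘ η from sign of y'
  have sgnode : ∀ u X : ℝ, u ∈ Set.Icc a b → 0 < y' u * X → y (η u) * X < 0 := by
    intro u X hu hpos
    have hode := hy_ode u hu
    have hc := hc_neg u hu
    rw [hode] at hpos
    by_contra hcon
    push_neg at hcon
    nlinarith [mul_nonneg (neg_nonneg.2 hc.le) hcon]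
  -- mean value theorem step
  have mvtE : ∀ p q X : ℝ, a ≤ p → q ≤ b → p < q → 0 < (y q - y p) * X →
      ∃ ξ, ξ ∈ Set.Ioo p q ∧ y (η ξ) * X < 0 := by
    intro p q X hp hq hpq hpos
    have hsub : Set.Icc p q ⊆ Set.Icc a b := Set.Icc_subset_Icc hp hq
    have hcont : ContinuousOn y (Set.Icc p q) :=
      (hy_cont.mono Set.subset_union_right).mono hsub
    have hder : ∀ x ∈ Set.Ioo p q, HasDerivAt y (y' x) x := fun x hx =>
      hDA x (Set.Ioo_subset_Ioo hp hq hx)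
    obtain ⟨ξ, hξ, hslope⟩ := exists_hasDerivAt_eq_slope y y' hpq hcont hder
    refine ⟨ξ, hξ, ?_⟩
    apply sgnode ξ X (hsub (Set.Ioo_subset_Icc_self hξ))
    rw [hslope, div_mul_eq_mul_div]
    exact div_pos hpos (by linarith)
  -- no-increase (antitone) step
  have noinc : ∀ p q X : ℝ, a ≤ p → q ≤ b → p ≤ q →
      (∀ u ∈ Set.Ioo p q, y' u * X ≤ 0) → (y q - y p) * X ≤ 0 := by
    intro p q X hp hq hpq hder
    have hsub : Set.Icc p q ⊆ Set.Icc a b := Set.Icc_subset_Icc hp hq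
    have hcont : ContinuousOn (fun u => y u * X) (Set.Icc p q) :=
      ((hy_cont.mono Set.subset_union_right).mono hsub).mul continuousOn_const
    have hanti : AntitoneOn (fun u => y u * X) (Set.Icc p q) := by
      apply antitoneOn_of_deriv_nonpos (convex_Icc p q) hcont
      · intro x hx
        rw [interior_Icc] at hx
        exact ((hDA x (Set.Ioo_subset_Ioo hp hq hx)).mul_const X).differentiableAt.differentiableWithinAt
      · intro x hx
        rw [interior_Icc] at hx
        rw [((hDA x (Set.Ioo_subset_Ioo hp hq hx)).mul_const X).deriv]
        exact hder x hx
    have h2 : y q * X ≤ y p * X := hanti (Set.left_mem_Icc.2 hpq) (Set.right_mem_Icc.2 hpq) hpq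
    have e : (y q - y p) * X = y q * X - y p * X := by ring
    rw [e]; linarith
  -- local sign near a simple zero, left side
  have locL : ∀ w X L : ℝ, w ∈ Set.Ioo a b → y w = 0 → 0 < y' w * X → L < w →
      ∃ x, x ∈ Set.Ioo L w ∧ y x * X < 0 := by
    intro w X L hw hw0 hX hL
    have hd := hDA w hw
    have hslope := hasDerivAt_iff_tendsto_slope.mp hd
    have hopen : IsOpen {z : ℝ | 0 < z * X} := isOpen_lt continuous_const (continuous_id.mul continuous_const)
    have hev : ∀ᶠ x in nhdsWithin w {w}ᶜ, 0 < slope y w x * X :=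
      hslope.eventually (hopen.mem_nhds hX)
    have hle : nhdsWithin w (Set.Iio w) ≤ nhdsWithin w {w}ᶜ :=
      nhdsWithin_mono w (fun x hx => ne_of_lt hx)
    have hev2 : ∀ᶠ x in nhdsWithin w (Set.Iio w), 0 < slope y w x * X := hev.filter_mono hle
    have hIoo : Set.Ioo L w ∈ nhdsWithin w (Set.Iio w) :=
      Ioo_mem_nhdsLT_of_mem ⟨hL, le_rfl⟩
    obtain ⟨x, hx1, hx2⟩ := (hev2.and (Filter.eventually_of_mem hIoo (fun x hx => hx))).exists
    refine ⟨x, hx2, ?_⟩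
    rw [slope_def_field, hw0, sub_zero, div_mul_eq_mul_div] at hx1
    have hxw : x - w < 0 := by have := hx2.2; linarith
    rcases div_pos_iff.1 hx1 with ⟨h1, h2⟩ | ⟨h1, h2⟩
    · linarith
    · exact h1
  -- local sign near a simple zero, right side
  have locR : ∀ w X R : ℝ, w ∈ Set.Ioo a b → y w = 0 → 0 < y' w * X → w < R →
      ∃ x, x ∈ Set.Ioo w R ∧ 0 < y x * X := by
    intro w X R hw hw0 hX hR
    have hd := hDA w hw
    have hslope := hasDerivAt_iff_tendsto_slope.mp hd
    have hopen : IsOpen {z : ℝ | 0 < z * X} := isOpen_lt continuous_const (continuous_id.mul continuous_const)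
    have hev : ∀ᶠ x in nhdsWithin w {w}ᶜ, 0 < slope y w x * X :=
      hslope.eventually (hopen.mem_nhds hX)
    have hle : nhdsWithin w (Set.Ioi w) ≤ nhdsWithin w {w}ᶜ :=
      nhdsWithin_mono w (fun x hx => (ne_of_gt hx))
    have hev2 : ∀ᶠ x in nhdsWithin w (Set.Ioi w), 0 < slope y w x * X := hev.filter_mono hle
    have hIoo : Set.Ioo w R ∈ nhdsWithin w (Set.Ioi w) :=
      Ioo_mem_nhdsGT_of_mem ⟨le_rfl, hR⟩
    obtain ⟨x, hx1, hx2⟩ := (hev2.and (Filter.eventually_of_mem hIoo (fun x hx => hx))).exists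
    refine ⟨x, hx2, ?_⟩
    rw [slope_def_field, hw0, sub_zero, div_mul_eq_mul_div] at hx1
    have hxw : 0 < x - w := by have := hx2.1; linarith
    rcases div_pos_iff.1 hx1 with ⟨h1, h2⟩ | ⟨h1, h2⟩
    · exact h1
    · linarith
  -- transport of an alternating chain through the equation
  have trans : ∀ (σ : ℝ) (K : ℕ) (s : ℕ → ℝ), 1 ≤ K →
      (∀ i, i ≤ K → s i ∈ Set.Icc a b) → (∀ i, i < K → s i < s (i+1)) →
      (∀ i, i ≤ K → 0 < y (s i) * (σ * (-1)^i)) →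
      ∃ ζ : ℕ → ℝ, (∀ i, i ≤ K-1 → η (s i) < ζ i ∧ ζ i < η (s (i+1))) ∧
        (∀ i, i < K-1 → ζ i < ζ (i+1)) ∧ (∀ i, i ≤ K-1 → 0 < y (ζ i) * (σ * (-1)^i)) := by
    intro σ K s hK hmem hmo hsgn
    have H : ∀ i, ∃ z, i < K → (z ∈ Set.Ioo (s i) (s (i+1)) ∧ y (η z) * (σ * (-1)^(i+1)) < 0) := by
      intro i
      by_cases hi : i < K
      · have h1 := hsgn i (by omega)
        have h2 := hsgn (i+1) (by omega)
        have e1 : σ * (-1:ℝ)^(i+1) = -(σ * (-1)^i) := by rw [pow_succ]; ring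
        have hslope : 0 < (y (s (i+1)) - y (s i)) * (σ * (-1)^(i+1)) := by
          rw [e1] at h2 ⊢; nlinarith [h1, h2]
        obtain ⟨ξ, hξ, hsg⟩ := mvtE (s i) (s (i+1)) (σ * (-1)^(i+1))
          (hmem i (by omega)).1 (hmem (i+1) (by omega)).2 (hmo i hi) hslope
        exact ⟨ξ, fun _ => ⟨hξ, hsg⟩⟩
      · exact ⟨0, fun h => absurd h hi⟩
    choose ξ hξ using H
    have hξab : ∀ i, i < K → ξ i ∈ Set.Icc a b := by
      intro i hi
      obtain ⟨h1, h2⟩ := (hξ i hi).1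
      exact ⟨le_trans (hmem i (by omega)).1 (le_of_lt h1), le_trans (le_of_lt h2) (hmem (i+1) (by omega)).2⟩
    refine ⟨fun i => η (ξ i), ?_, ?_, ?_⟩
    · intro i hi
      have hik : i < K := by omega
      constructor
      · exact hη_mono (hmem i (by omega)) (hξab i hik) (hξ i hik).1.1
      · exact hη_mono (hξab i hik) (hmem (i+1) (by omega)) (hξ i hik).1.2
    · intro i hi
      have h1 : i < K := by omega
      have h2 : i + 1 < K := by omega
      have : ξ i < ξ (i+1) := lt_trans (hξ i h1).1.2 (hξ (i+1) h2).1.1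
      exact hη_mono (hξab i h1) (hξab (i+1) h2) this
    · intro i hi
      have hik : i < K := by omega
      have := (hξ i hik).2
      have e1 : σ * (-1:ℝ)^(i+1) = -(σ * (-1)^i) := by rw [pow_succ]; ring
      rw [e1] at this
      nlinarith

  -- Overlap monotonicity, construction form: an even number of sign changes on
  -- [η q', q'] yields as many on [η q, q] for q ≤ q' with η q' ≤ q.
  have OMc : ∀ q q' : ℝ, a ≤ q → q ≤ q' → q' ≤ b → η q' ≤ q →
      ∀ K : ℕ, Even K → K ∈ scSet y (η q') q' → K ∈ scSet y (η q) q := by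
    intro q q' haq hqq' hq'b hce K hKeven hKmem
    have hK1 : 1 ≤ K := hKmem.1
    have hK2 : 2 ≤ K := by rcases hKeven with ⟨m, hm⟩; omega
    obtain ⟨σ, s, hσ, hpat⟩ := scSet_to_pat hKmem hK1
    have hqab : q ∈ Set.Icc a b := ⟨haq, le_trans hqq' hq'b⟩
    have hq'ab : q' ∈ Set.Icc a b := ⟨le_trans haq hqq', hq'b⟩
    have hηq : η q ≤ η q' := hmono hqab hq'ab hqq'
    have hηqq : η q < q := hηlt q hqab
    have hpow : ∀ m n : ℕ, m + n = K → ((-1:ℝ)^m) * ((-1:ℝ)^n) = 1 := by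
      intro m n h; rw [← pow_add, h]; exact Even.neg_one_pow hKeven
    by_cases hA : s K ≤ q
    · refine pat_mem_scSet ⟨?_, hpat.2.1, hpat.2.2⟩ (by omega)
      intro i hi
      exact ⟨le_trans hηq (hpat.1 i hi).1, le_trans (pat_le hpat K le_rfl i hi) hA⟩
    · push_neg at hA
      have hex : ∃ i, q < s i := ⟨K, hA⟩
      obtain ⟨i₀, hi0p, hi0min, hi0K⟩ : ∃ i₀, q < s i₀ ∧ (∀ j, j < i₀ → s j ≤ q) ∧ i₀ ≤ K :=
        ⟨Nat.find hex, Nat.find_spec hex, fun j hj => not_lt.1 (Nat.find_min hex hj),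
          Nat.find_min' hex hA⟩
      have hsufab : ∀ i, i₀ ≤ i → i ≤ K → s i ∈ Set.Icc a b := by
        intro i h1 h2
        exact ⟨le_trans haq (le_of_lt (lt_of_lt_of_le hi0p (pat_le hpat i h2 i₀ h1))),
          le_trans (hpat.1 i h2).2 hq'b⟩
      have hsi0 : s i₀ ∈ Set.Icc a b := hsufab i₀ le_rfl hi0K
      have hsK : s K ∈ Set.Icc a b := hsufab K hi0K le_rfl
      have hηsK : η (s K) ≤ η q' := hmono hsK hq'ab (hpat.1 K le_rfl).2
      have hηsi0 : η (s i₀) ≤ η q' := hmono hsi0 hq'ab (hpat.1 i₀ hi0K).2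
      have hkeptPat : 1 ≤ i₀ → Pat y (η q) q σ (i₀ - 1) s := fun h1 =>
        ⟨fun i hi => ⟨le_trans hηq (hpat.1 i (by omega)).1, hi0min i (by omega)⟩,
         fun i hi => hpat.2.1 i (by omega), fun i hi => hpat.2.2 i (by omega)⟩
      have hζex : i₀ < K → ∃ ζ, Pat y (η q) q (σ * (-1)^i₀) (K - i₀ - 1) ζ ∧
          η (s i₀) < ζ 0 ∧ ζ (K - i₀ - 1) < η (s K) := by
        intro hiK
        obtain ⟨ζ, hζb, hζm, hζs⟩ := trans (σ * (-1)^i₀) (K - i₀) (fun i => s (i+i₀)) (by omega)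
          (fun i hi => hsufab (i+i₀) (by omega) (by omega))
          (fun i hi => by
            have h := hpat.2.1 (i+i₀) (by omega)
            simpa [show i+1+i₀ = i+i₀+1 from by omega] using h)
          (fun i hi => by
            have h := hpat.2.2 (i+i₀) (by omega)
            have e : σ * (-1:ℝ)^(i+i₀) = σ * (-1)^i₀ * (-1)^i := by rw [pow_add]; ring
            rw [e] at h
            exact h)
        have hζmem : ∀ i, i ≤ K - i₀ - 1 → ζ i ∈ Set.Icc (η q) q := by
          intro i hi
          have hb := hζb i hi
          constructor
          · have h1 : η q < η (s (i+i₀)) := hη_mono hqab (hsufab _ (by omega) (by omega))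
              (lt_of_lt_of_le hi0p (pat_le hpat (i+i₀) (by omega) i₀ (by omega)))
            linarith [hb.1]
          · have h2 : η (s (i+1+i₀)) ≤ η (s K) := hmono (hsufab _ (by omega) (by omega)) hsK
              (pat_le hpat K le_rfl (i+1+i₀) (by omega))
            have h3 := hb.2
            linarith [hηsK, hce]
        refine ⟨ζ, ⟨hζmem, hζm, hζs⟩, ?_, ?_⟩
        · have h := (hζb 0 (by omega)).1
          rwa [show (0:ℕ)+i₀ = i₀ from by omega] at h
        · have h := (hζb (K-i₀-1) le_rfl).2
          rwa [show (K-i₀-1)+1+i₀ = K from by omega] at h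
      by_cases hD : ∃ u, u ∈ Set.Ioo q (s i₀) ∧ 0 < y' u * (σ * (-1)^i₀)
      · -- a point with the right derivative sign exists in (q, s i₀)
        obtain ⟨u, hu, hu'⟩ := hD
        have huab : u ∈ Set.Icc a b := ⟨le_trans haq hu.1.le, le_trans hu.2.le hsi0.2⟩
        have hyηu : y (η u) * (σ * (-1)^i₀) < 0 := sgnode u _ huab hu'
        have hηult : η u < η (s i₀) := hη_mono huab hsi0 hu.2
        have hηu_mem : η u ∈ Set.Icc (η q) q :=
          ⟨(hη_mono hqab huab hu.1).le, by linarith [hηsi0, hce]⟩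
        have hpt : Pat y (η q) q (-(σ * (-1)^i₀)) 0 (fun _ => η u) :=
          pat_single hηu_mem (by linarith)
        rcases Nat.lt_or_ge i₀ K with hiK | hiK
        · obtain ⟨ζ, hζpat, hζ0, hζlast⟩ := hζex hiK
          have hleft := pat_concat hpt hζpat (by rw [pow_one]; ring) (by
            show η u < ζ 0
            linarith)
          rw [show 0 + (K - i₀ - 1) + 1 = K - i₀ from by omega] at hleft
          rcases Nat.eq_zero_or_pos i₀ with hi00 | hi01
          · -- no kept block
            subst hi00
            rw [show K - 0 = K from by omega] at hleft
            exact pat_mem_scSet hleft (by omega)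
          · have hkept := hkeptPat hi01
            have hcomb := pat_concat hleft hkept (by
                rw [pow_succ]
                linear_combination (-σ) * (hpow i₀ (K-i₀) (by omega))) (by
              show patAppend 0 (fun _ => η u) ζ (K - i₀) < s 0
              have he : patAppend 0 (fun _ => η u) ζ (K-i₀) = ζ (K-i₀-1) := by
                unfold patAppend
                rw [if_neg (by omega)]
              rw [he]
              have hs0 : η q' ≤ s 0 := (hpat.1 0 (by omega)).1
              linarith [hηsK])
            rw [show K - i₀ + (i₀ - 1) + 1 = K from by omega] at hcomb
            exact pat_mem_scSet hcomb (by omega)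
        · -- i₀ = K : only the kept block
          have hi0eq : i₀ = K := by omega
          have hkept := hkeptPat (by omega)
          have hcomb := pat_concat hpt hkept (by
              rw [pow_one, hi0eq, Even.neg_one_pow hKeven]; ring) (by
            show η u < s 0
            have hs0 : η q' ≤ s 0 := (hpat.1 0 (by omega)).1
            linarith [hηsi0])
          rw [show 0 + (i₀ - 1) + 1 = K from by omega] at hcomb
          exact pat_mem_scSet hcomb (by omega)
      · -- no such point: q itself carries the sign of s i₀
        push_neg at hD
        have hyq : 0 < y q * (σ * (-1)^i₀) := by
          have h1 := noinc q (s i₀) (σ * (-1)^i₀) haq hsi0.2 hi0p.le hD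
          have h2 := hpat.2.2 i₀ hi0K
          nlinarith [h1, h2]
        have hqpt : Pat y (η q) q (σ * (-1)^i₀) 0 (fun _ => q) :=
          pat_single ⟨hηqq.le, le_rfl⟩ hyq
        rcases Nat.eq_zero_or_pos i₀ with hi00 | hi01
        · -- i₀ = 0 : ζ then the point q
          subst hi00
          obtain ⟨ζ, hζpat, hζ0, hζlast⟩ := hζex (by omega)
          have hcomb := pat_concat hζpat hqpt (by
              rw [show K - 0 - 1 + 1 = K from by omega]
              simp only [pow_zero, mul_one]
              rw [Even.neg_one_pow hKeven, mul_one]) (by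
            show ζ (K - 0 - 1) < q
            linarith [hηsK, hce])
          rw [show K - 0 - 1 + 0 + 1 = K from by omega] at hcomb
          exact pat_mem_scSet hcomb (by omega)
        · have hkept := hkeptPat hi01
          have hslt : s (i₀ - 1) < q := by
            rcases lt_or_eq_of_le (hi0min (i₀-1) (by omega)) with h | h
            · exact h
            · exfalso
              have h1 := hpat.2.2 (i₀-1) (by omega)
              rw [h] at h1
              have e : σ * (-1:ℝ)^i₀ = -(σ * (-1)^(i₀-1)) := by
                obtain ⟨j, hj⟩ : ∃ j, i₀ = j + 1 := ⟨i₀ - 1, by omega⟩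
                subst hj
                rw [Nat.add_sub_cancel, pow_succ]
                ring
              rw [e] at hyq
              nlinarith [h1, hyq]
          have hkq := pat_concat hkept hqpt (by
              rw [show i₀ - 1 + 1 = i₀ from by omega]) hslt
          rw [show i₀ - 1 + 0 + 1 = i₀ from by omega] at hkq
          rcases Nat.lt_or_ge i₀ K with hiK | hiK
          · obtain ⟨ζ, hζpat, hζ0, hζlast⟩ := hζex hiK
            have hcomb := pat_concat hζpat hkq (by
                rw [show K - i₀ - 1 + 1 = K - i₀ from by omega]
                linear_combination (-σ) * (hpow i₀ (K-i₀) (by omega))) (by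
              show ζ (K - i₀ - 1) < patAppend (i₀ - 1) s (fun _ => q) 0
              have he : patAppend (i₀-1) s (fun _ => q) 0 = s 0 := by
                unfold patAppend
                rw [if_pos (by omega)]
              rw [he]
              have hs0 : η q' ≤ s 0 := (hpat.1 0 (by omega)).1
              linarith [hηsK])
            rw [show K - i₀ - 1 + i₀ + 1 = K from by omega] at hcomb
            exact pat_mem_scSet hcomb (by omega)
          · have hi0eq : i₀ = K := by omega
            rw [hi0eq] at hkq
            exact pat_mem_scSet hkq (by omega)

  -- full overlap monotonicity of V
  have OMfull : ∀ q q' : ℝ, a ≤ q → q ≤ q' → q' ≤ b → η q' ≤ q →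
      V y (η q') q' ≤ V y (η q) q := by
    intro q q' haq hqq' hq'b hce
    rcases eq_or_ne (V y (η q') q') ⊤ with htop | hne
    · have hsc' : sc y (η q') q' = ⊤ := V_eq_top_iff.1 htop
      have htgt : sc y (η q) q = ⊤ := by
        rcases eq_or_ne (sc y (η q) q) ⊤ with h | h
        · exact h
        · exfalso
          obtain ⟨n, hn2⟩ := WithTop.ne_top_iff_exists.1 h
          obtain ⟨K, hKmem, hKge⟩ := sc_unbounded hsc' (n+3)
          obtain ⟨K', hK'mem, hK'even, hK'ge⟩ :
              ∃ K', K' ∈ scSet y (η q') q' ∧ Even K' ∧ n+1 ≤ K' := by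
            rcases Nat.even_or_odd K with he | ho
            · exact ⟨K, hKmem, he, by omega⟩
            · refine ⟨K-1, scSet_down hKmem (by omega) (by omega), ?_, by omega⟩
              rcases ho with ⟨m, hm⟩; exact ⟨m, by omega⟩
          have h3 := mem_sc_le (OMc q q' haq hqq' hq'b hce K' hK'even hK'mem)
          rw [← hn2] at h3
          have : K' ≤ n := Nat.cast_le.mp h3
          omega
      calc V y (η q') q' ≤ ⊤ := le_top
        _ = sc y (η q) q := htgt.symm
        _ ≤ V y (η q) q := V_ge_sc _ _ _
    · obtain ⟨w, hw⟩ := WithTop.ne_top_iff_exists.1 hne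
      rw [← hw]
      have hodd := V_parity hw.symm
      rcases Nat.lt_or_ge w 2 with h2 | h2
      · have hw1 : w = 1 := by rcases hodd with ⟨m, hm⟩; omega
        rw [hw1]
        exact V_ge_one y (η q) q
      · have hw3 : 3 ≤ w := by rcases hodd with ⟨m, hm⟩; omega
        have hev : Even (w-1) := by rcases hodd with ⟨m, hm⟩; exact ⟨m, by omega⟩
        have hmem : (w-1) ∈ scSet y (η q') q' := by
          rcases V_cases hw.symm with hsc | ⟨hw1, hsc⟩
          · exact scSet_down (sc_eq_max hsc (by omega)) (by omega) (by omega)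
          · exact sc_eq_max hsc (by omega)
        have h3 := mem_sc_le (OMc q q' haq hqq' hq'b hce (w-1) hev hmem)
        exact V_of_sc_ge hodd h3
  -- the double-zero core lemma
  have CORE : ∀ p₁ q₁ : ℝ, a ≤ p₁ → q₁ ≤ b → p₁ < q₁ → y p₁ = 0 → y q₁ = 0 →
      ∀ K : ℕ, (1 ≤ K → K ∈ scSet y p₁ q₁) → (K = 0 → ∃ x ∈ Set.Icc p₁ q₁, y x ≠ 0) →
      (K+1) ∈ scSet y (η p₁) (η q₁) := by
    intro p₁ q₁ hap hqb hpq hyp0 hyq0 K hKm hK0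
    have hp₁ab : p₁ ∈ Set.Icc a b := ⟨hap, by linarith⟩
    have hq₁ab : q₁ ∈ Set.Icc a b := ⟨by linarith, hqb⟩
    rcases Nat.eq_zero_or_pos K with rfl | hK1
    · obtain ⟨x, hx, hxne⟩ := hK0 rfl
      have hxp : p₁ < x := lt_of_le_of_ne hx.1 (fun h => hxne (by rw [← h]; exact hyp0))
      have hxq : x < q₁ := lt_of_le_of_ne hx.2 (fun h => hxne (by rw [h]; exact hyq0))
      have hm1 : 0 < (y x - y p₁) * (y x) := by
        rw [hyp0]; nlinarith [mul_self_pos.2 hxne]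
      obtain ⟨ξ₁, hξ₁, hs₁⟩ := mvtE p₁ x (y x) hap (by linarith) hxp hm1
      have hm2 : 0 < (y q₁ - y x) * (-(y x)) := by
        rw [hyq0]; nlinarith [mul_self_pos.2 hxne]
      obtain ⟨ξ₂, hξ₂, hs₂⟩ := mvtE x q₁ (-(y x)) (by linarith) hqb hxq hm2
      have hξ₁ab : ξ₁ ∈ Set.Icc a b := ⟨by linarith [hξ₁.1], by linarith [hξ₁.2]⟩
      have hξ₂ab : ξ₂ ∈ Set.Icc a b := ⟨by linarith [hξ₂.1], by linarith [hξ₂.2]⟩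
      have hpt1 : Pat y (η p₁) (η q₁) (-(y x)) 0 (fun _ => η ξ₁) :=
        pat_single ⟨(hη_mono hp₁ab hξ₁ab hξ₁.1).le,
          (hη_mono hξ₁ab hq₁ab (by linarith [hξ₁.2])).le⟩ (by simpa using by linarith [hs₁])
      have hpt2 : Pat y (η p₁) (η q₁) (y x) 0 (fun _ => η ξ₂) :=
        pat_single ⟨(hη_mono hp₁ab hξ₂ab (by linarith [hξ₂.1])).le,
          (hη_mono hξ₂ab hq₁ab hξ₂.2).le⟩ (by simpa using by linarith [hs₂])
      have hcomb := pat_concat hpt1 hpt2 (by rw [pow_one]; ring)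
        (hη_mono hξ₁ab hξ₂ab (by linarith [hξ₁.2, hξ₂.1]))
      exact pat_mem_scSet hcomb (by omega)
    · obtain ⟨σ, s, hσ, hpat⟩ := scSet_to_pat (hKm hK1) hK1
      have hsab : ∀ i, i ≤ K → s i ∈ Set.Icc a b := fun i hi =>
        ⟨le_trans hap (hpat.1 i hi).1, le_trans (hpat.1 i hi).2 hqb⟩
      have hs0p : p₁ < s 0 := by
        rcases lt_or_eq_of_le (hpat.1 0 (by omega)).1 with h | h
        · exact h
        · exfalso; have h2 := hpat.2.2 0 (by omega); rw [← h, hyp0] at h2; simp at h2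
      have hsKq : s K < q₁ := by
        rcases lt_or_eq_of_le (hpat.1 K le_rfl).2 with h | h
        · exact h
        · exfalso; have h2 := hpat.2.2 K le_rfl; rw [h, hyq0] at h2; simp at h2
      have hm1 : 0 < (y (s 0) - y p₁) * σ := by
        rw [hyp0, sub_zero]
        have h0 := hpat.2.2 0 (by omega)
        simpa using h0
      obtain ⟨ξ₀, hξ₀, hsg₀⟩ := mvtE p₁ (s 0) σ hap (hsab 0 (by omega)).2 hs0p hm1
      have hm2 : 0 < (y q₁ - y (s K)) * (-(σ * (-1)^K)) := by
        rw [hyq0]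
        have hK2 := hpat.2.2 K le_rfl
        nlinarith [hK2]
      obtain ⟨ξ₁, hξ₁, hsg₁⟩ := mvtE (s K) q₁ (-(σ * (-1)^K)) (hsab K le_rfl).1 hqb hsKq hm2
      obtain ⟨ζ, hζb, hζm, hζs⟩ := trans σ K s hK1 hsab hpat.2.1 hpat.2.2
      have hξ₀ab : ξ₀ ∈ Set.Icc a b := ⟨by linarith [hξ₀.1], le_trans hξ₀.2.le (hsab 0 (by omega)).2⟩
      have hξ₁ab : ξ₁ ∈ Set.Icc a b := ⟨le_trans (hsab K le_rfl).1 hξ₁.1.le, by linarith [hξ₁.2]⟩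
      have hζmem : ∀ i, i ≤ K - 1 → ζ i ∈ Set.Icc (η p₁) (η q₁) := by
        intro i hi
        have hb := hζb i hi
        constructor
        · have h1 : η p₁ < η (s i) := hη_mono hp₁ab (hsab i (by omega))
            (lt_of_lt_of_le hs0p (pat_le hpat i (by omega) 0 (by omega)))
          linarith [hb.1]
        · have h1 : η (s (i+1)) ≤ η (s K) := hmono (hsab (i+1) (by omega)) (hsab K le_rfl)
            (pat_le hpat K le_rfl (i+1) (by omega))
          have hKb : η (s K) < η q₁ := hη_mono (hsab K le_rfl) hq₁ab hsKq
          linarith [hb.2]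
      have hζpat : Pat y (η p₁) (η q₁) σ (K-1) ζ := ⟨hζmem, hζm, hζs⟩
      have hpt0 : Pat y (η p₁) (η q₁) (-σ) 0 (fun _ => η ξ₀) := by
        apply pat_single ⟨(hη_mono hp₁ab hξ₀ab hξ₀.1).le,
          (hη_mono hξ₀ab hq₁ab (by linarith [hξ₀.2, (hpat.1 0 (by omega)).2])).le⟩
        have e0 : y (η ξ₀) * -σ = -(y (η ξ₀) * σ) := by ring
        rw [e0]; linarith [hsg₀]
      have hpt1 : Pat y (η p₁) (η q₁) (σ * (-1)^K) 0 (fun _ => η ξ₁) := by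
        apply pat_single ⟨(hη_mono hp₁ab hξ₁ab (by linarith [hξ₁.1, (hpat.1 K le_rfl).1])).le,
          (hη_mono hξ₁ab hq₁ab hξ₁.2).le⟩
        have e1 : y (η ξ₁) * (σ * (-1)^K) = -(y (η ξ₁) * -(σ * (-1)^K)) := by ring
        rw [e1]; linarith [hsg₁]
      have hleft := pat_concat hpt0 hζpat (by rw [pow_one]; ring) (by
        show η ξ₀ < ζ 0
        have h1 : η ξ₀ < η (s 0) := hη_mono hξ₀ab (hsab 0 (by omega)) hξ₀.2
        linarith [(hζb 0 (by omega)).1])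
      rw [show 0 + (K - 1) + 1 = K from by omega] at hleft
      have hcomb := pat_concat hleft hpt1 (by rw [pow_succ]; ring) (by
        show patAppend 0 (fun _ => η ξ₀) ζ K < η ξ₁
        have he : patAppend 0 (fun _ => η ξ₀) ζ K = ζ (K-1) := by
          unfold patAppend
          rw [if_neg (by omega)]
        rw [he]
        have h1 : η (s K) < η ξ₁ := hη_mono (hsab K le_rfl) hξ₁ab hξ₁.1
        have h2 := (hζb (K-1) le_rfl).2
        rw [show (K-1)+1 = K from by omega] at h2
        linarith)
      rw [show K + 0 + 1 = K + 1 from by omega] at hcomb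
      exact pat_mem_scSet hcomb (by omega)
  -- the half-core lemma (only the left end is a zero)
  have HALF : ∀ p₁ q₁ : ℝ, a ≤ p₁ → q₁ ≤ b → p₁ < q₁ → y p₁ = 0 →
      ∀ K : ℕ, 1 ≤ K → K ∈ scSet y p₁ q₁ → K ∈ scSet y (η p₁) (η q₁) := by
    intro p₁ q₁ hap hqb hpq hyp0 K hK1 hKmem
    have hp₁ab : p₁ ∈ Set.Icc a b := ⟨hap, by linarith⟩
    have hq₁ab : q₁ ∈ Set.Icc a b := ⟨by linarith, hqb⟩
    obtain ⟨σ, s, hσ, hpat⟩ := scSet_to_pat hKmem hK1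
    have hsab : ∀ i, i ≤ K → s i ∈ Set.Icc a b := fun i hi =>
      ⟨le_trans hap (hpat.1 i hi).1, le_trans (hpat.1 i hi).2 hqb⟩
    have hs0p : p₁ < s 0 := by
      rcases lt_or_eq_of_le (hpat.1 0 (by omega)).1 with h | h
      · exact h
      · exfalso; have h2 := hpat.2.2 0 (by omega); rw [← h, hyp0] at h2; simp at h2
    have hm1 : 0 < (y (s 0) - y p₁) * σ := by
      rw [hyp0, sub_zero]
      have h0 := hpat.2.2 0 (by omega)
      simpa using h0
    obtain ⟨ξ₀, hξ₀, hsg₀⟩ := mvtE p₁ (s 0) σ hap (hsab 0 (by omega)).2 hs0p hm1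
    obtain ⟨ζ, hζb, hζm, hζs⟩ := trans σ K s hK1 hsab hpat.2.1 hpat.2.2
    have hξ₀ab : ξ₀ ∈ Set.Icc a b := ⟨by linarith [hξ₀.1], le_trans hξ₀.2.le (hsab 0 (by omega)).2⟩
    have hζmem : ∀ i, i ≤ K - 1 → ζ i ∈ Set.Icc (η p₁) (η q₁) := by
      intro i hi
      have hb := hζb i hi
      constructor
      · have h1 : η p₁ < η (s i) := hη_mono hp₁ab (hsab i (by omega))
          (lt_of_lt_of_le hs0p (pat_le hpat i (by omega) 0 (by omega)))
        linarith [hb.1]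
      · have h1 : η (s (i+1)) ≤ η (s K) := hmono (hsab (i+1) (by omega)) (hsab K le_rfl)
          (pat_le hpat K le_rfl (i+1) (by omega))
        have hKb : η (s K) ≤ η q₁ := hmono (hsab K le_rfl) hq₁ab (hpat.1 K le_rfl).2
        linarith [hb.2]
    have hζpat : Pat y (η p₁) (η q₁) σ (K-1) ζ := ⟨hζmem, hζm, hζs⟩
    have hpt0 : Pat y (η p₁) (η q₁) (-σ) 0 (fun _ => η ξ₀) := by
      apply pat_single ⟨(hη_mono hp₁ab hξ₀ab hξ₀.1).le,
        (hη_mono hξ₀ab hq₁ab (by linarith [hξ₀.2, (hpat.1 0 (by omega)).2])).le⟩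
      have e0 : y (η ξ₀) * -σ = -(y (η ξ₀) * σ) := by ring
      rw [e0]; linarith [hsg₀]
    have hcomb := pat_concat hpt0 hζpat (by rw [pow_one]; ring) (by
      show η ξ₀ < ζ 0
      have h1 : η ξ₀ < η (s 0) := hη_mono hξ₀ab (hsab 0 (by omega)) hξ₀.2
      linarith [(hζb 0 (by omega)).1])
    rw [show 0 + (K - 1) + 1 = K from by omega] at hcomb
    exact pat_mem_scSet hcomb (by omega)
  -- parity lemma at a simple-zero right endpoint
  have PAR : ∀ w₁ : ℝ, ∀ M : ℕ, w₁ ∈ Set.Ioo a b → y w₁ = 0 → y (η w₁) ≠ 0 →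
      sc y (η w₁) w₁ = (M:ℕ∞) → ¬ Odd M := by
    intro w₁ M hw hw0 hηw0 hscM hModd
    have hM1 : 1 ≤ M := hModd.pos
    have hwab : w₁ ∈ Set.Icc a b := Set.Ioo_subset_Icc_self hw
    have hmemM := sc_eq_max hscM hM1
    have hnotM := sc_succ_notMem hscM
    obtain ⟨σ, s, hσ, hpat⟩ := scSet_to_pat hmemM hM1
    have hσ0 : σ ≠ 0 := by rcases hσ with h | h <;> rw [h] <;> norm_num
    have hbl := pat_band_left hpat hnotM (η w₁) ⟨le_rfl, (hpat.1 0 (by omega)).1⟩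
    have hδ : 0 < y (η w₁) * σ := lt_of_le_of_ne hbl (Ne.symm (mul_ne_zero hηw0 hσ0))
    have hd : 0 < y' w₁ * (-σ) := by
      have hode := hy_ode w₁ hwab
      have hc := hc_neg w₁ hwab
      rw [hode]
      nlinarith [hδ]
    have hsMw : s M < w₁ := by
      rcases lt_or_eq_of_le (hpat.1 M le_rfl).2 with h | h
      · exact h
      · exfalso; have h2 := hpat.2.2 M le_rfl; rw [h, hw0] at h2; simp at h2
    obtain ⟨x, hx, hxs⟩ := locL w₁ (-σ) (s M) hw hw0 hd hsMw
    have hbr := pat_band_right hpat hnotM x ⟨hx.1.le, hx.2.le⟩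
    rw [Odd.neg_one_pow hModd] at hbr
    nlinarith [hbr, hxs]

  ------------------------------------------------------------------
  -- Grid values of V
  ------------------------------------------------------------------
  obtain ⟨v, hv⟩ : ∃ v : ℕ, V y t1 t = (v:ℕ∞) := by
    obtain ⟨v, hv⟩ := WithTop.ne_top_iff_exists.1 hVfin
    exact ⟨v, hv.symm⟩
  have hvodd : Odd v := V_parity hv
  have hst1 : V y t1 t ≤ V y t2 t1 := by
    have h := OMfull t1 t hat1.le ht01.le htb (le_of_eq ht1def.symm)
    rwa [← ht1def, ← ht2def] at h
  have hst2 : V y t2 t1 ≤ V y t3 t2 := by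
    have h := OMfull t2 t1 hat2.le ht12.le ht1m.2 (le_of_eq ht2def.symm)
    rwa [← ht2def, ← ht3def] at h
  have hst3 : V y t3 t2 ≤ V y t4 t3 := by
    have h := OMfull t3 t2 ht3m.1 ht23.le ht2m.2 (le_of_eq ht3def.symm)
    rwa [← ht3def, ← ht4def] at h
  have hVt3 : V y t4 t3 = (v:ℕ∞) := by rw [← hVeq0]; exact hv
  have hVt1 : V y t2 t1 = (v:ℕ∞) := by
    refine le_antisymm ?_ ?_
    · exact (hst2.trans hst3).trans (le_of_eq hVt3)
    · rw [← hv]; exact hst1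
  have hVt2 : V y t3 t2 = (v:ℕ∞) := by
    refine le_antisymm ?_ ?_
    · exact hst3.trans (le_of_eq hVt3)
    · rw [← hVt1]; exact hst2
  -- sandwich values between grid points
  have hWmid : ∀ x, t1 ≤ x → x ≤ t → V y (η x) x = (v:ℕ∞) := by
    intro x h1 h2
    have hxab : x ∈ Set.Icc a b := ⟨le_trans hat1.le h1, le_trans h2 htb⟩
    have hup : V y (η x) x ≤ V y t2 t1 := by
      have h := OMfull t1 x hat1.le h1 hxab.2 (by rw [ht1def]; exact hmono hxab htab h2)
      rwa [← ht2def] at h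
    have hdn : V y t1 t ≤ V y (η x) x := by
      have h := OMfull x t hxab.1 h2 htb (by rw [← ht1def]; exact h1)
      rwa [← ht1def] at h
    refine le_antisymm (hup.trans (le_of_eq hVt1)) ?_
    rw [← hv]; exact hdn
  have hWmid2 : ∀ x, t2 ≤ x → x ≤ t1 → V y (η x) x = (v:ℕ∞) := by
    intro x h1 h2
    have hxab : x ∈ Set.Icc a b := ⟨le_trans hat2.le h1, le_trans h2 ht1m.2⟩
    have hup : V y (η x) x ≤ V y t3 t2 := by
      have h := OMfull t2 x hat2.le h1 hxab.2 (by rw [ht2def]; exact hmono hxab ht1m h2)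
      rwa [← ht3def] at h
    have hdn : V y t2 t1 ≤ V y (η x) x := by
      have h := OMfull x t1 hxab.1 h2 ht1m.2 (by rw [← ht2def]; exact h1)
      rwa [← ht2def] at h
    refine le_antisymm (hup.trans (le_of_eq hVt2)) ?_
    rw [← hVt1]; exact hdn
  have hWmid3 : ∀ x, t3 ≤ x → x ≤ t2 → V y (η x) x = (v:ℕ∞) := by
    intro x h1 h2
    have hxab : x ∈ Set.Icc a b := ⟨le_trans ht3m.1 h1, le_trans h2 ht2m.2⟩
    have hup : V y (η x) x ≤ V y t4 t3 := by
      have h := OMfull t3 x ht3m.1 h1 hxab.2 (by rw [ht3def]; exact hmono hxab ht2m h2)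
      rwa [← ht4def] at h
    have hdn : V y t3 t2 ≤ V y (η x) x := by
      have h := OMfull x t2 hxab.1 h2 ht2m.2 (by rw [← ht3def]; exact h1)
      rwa [← ht3def] at h
    refine le_antisymm (hup.trans (le_of_eq hVt3)) ?_
    rw [← hVt2]; exact hdn
  ------------------------------------------------------------------
  -- Master 1: no double zeros on [t1, t]
  ------------------------------------------------------------------
  have noD1 : ∀ z, z ∈ Set.Icc t1 t → y z = 0 → y (η z) = 0 → False := by
    intro z hz hz0 hz1
    have hzab : z ∈ Set.Icc a b := ⟨le_trans hat1.le hz.1, le_trans hz.2 htb⟩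
    have hη1 : t2 ≤ η z := by rw [ht2def]; exact hmono ht1m hzab hz.1
    have hη2 : η z ≤ t1 := by rw [ht1def]; exact hmono hzab htab hz.2
    have hηz_ab : η z ∈ Set.Icc a b := ⟨le_trans hat2.le hη1, le_trans hη2 ht1m.2⟩
    have hη21 : t3 ≤ η (η z) := by rw [ht3def]; exact hmono ht2m hηz_ab hη1
    have hη22 : η (η z) ≤ t2 := by rw [ht2def]; exact hmono hηz_ab ht1m hη2
    have hW1 : V y (η z) z = (v:ℕ∞) := hWmid z hz.1 hz.2
    have hW2 : V y (η (η z)) (η z) = (v:ℕ∞) := hWmid2 (η z) hη1 hη2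
    have hW3 : V y (η (η (η z))) (η (η z)) = (v:ℕ∞) := hWmid3 (η (η z)) hη21 hη22
    have hsc2le : sc y (η (η z)) (η z) ≤ (v:ℕ∞) := le_trans (V_ge_sc _ _ _) (le_of_eq hW2)
    rcases V_cases hW1 with hm | ⟨hv1, hm⟩
    · -- sc on [η z, z] equals v : immediate contradiction via CORE
      have hcore := CORE (η z) z hηz_ab.1 hzab.2 (hηlt z hzab) hz1 hz0 v
        (fun h1 => sc_eq_max hm h1)
        (fun h0 => absurd h0 (by rcases hvodd with ⟨m, hm2⟩; omega))
      have hle := le_trans (mem_sc_le hcore) hsc2le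
      have : v + 1 ≤ v := Nat.cast_le.mp hle
      omega
    · -- sc on [η z, z] equals v - 1
      have hcore := CORE (η z) z hηz_ab.1 hzab.2 (hηlt z hzab) hz1 hz0 (v-1)
        (fun h1 => sc_eq_max hm h1)
        (fun _ => hy_ne z hzab)
      have hge := mem_sc_le hcore
      have hne2 : sc y (η (η z)) (η z) ≠ ⊤ := by
        intro h
        rw [h] at hsc2le
        exact WithTop.coe_ne_top (top_le_iff.1 hsc2le)
      obtain ⟨M, hM⟩ := WithTop.ne_top_iff_exists.1 hne2
      have hMv : M = v := by
        rw [← hM] at hge hsc2le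
        have h1 : v - 1 + 1 ≤ M := Nat.cast_le.mp hge
        have h2 : M ≤ v := Nat.cast_le.mp hsc2le
        have := hvodd.pos
        omega
      by_cases hzz : y (η (η z)) = 0
      · have hcore2 := CORE (η (η z)) (η z) (le_trans ht3m.1 hη21) hηz_ab.2
          (hηlt (η z) hηz_ab) hzz hz1 M
          (fun h1 => sc_eq_max hM.symm h1)
          (fun h0 => absurd h0 (by have := hvodd.pos; omega))
        have hle2 : sc y (η (η (η z))) (η (η z)) ≤ (v:ℕ∞) :=
          le_trans (V_ge_sc _ _ _) (le_of_eq hW3)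
        have hle3 := le_trans (mem_sc_le hcore2) hle2
        have : M + 1 ≤ v := Nat.cast_le.mp hle3
        omega
      · have hpar := PAR (η z) M
          ⟨lt_of_lt_of_le hat2 hη1, lt_of_le_of_lt hη2 (lt_of_lt_of_le ht01 htb)⟩
          hz1 hzz hM.symm
        exact hpar (hMv ▸ hvodd)
  ------------------------------------------------------------------
  -- Master 2: boundary degeneracy is impossible
  ------------------------------------------------------------------
  have noD2 : y t1 = 0 → 0 < y t2 * y t → False := by
    intro hz1 hprod
    have hyt2 : y t2 ≠ 0 := by intro h; rw [h] at hprod; simp at hprod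
    have hyt0 : y t ≠ 0 := by intro h; rw [h] at hprod; simp at hprod
    have hct1 := hc_neg t1 ht1m
    have hy't1 : y' t1 = c t1 * y t2 := by rw [hy_ode t1 ht1m, ← ht2def]
    have hd : 0 < y' t1 * (-(y t2)) := by
      rw [hy't1]; nlinarith [mul_self_pos.2 hyt2]
    have ht1Ioo : t1 ∈ Set.Ioo a b := ⟨hat1, lt_of_lt_of_le ht01 htb⟩
    rcases V_cases hv with hm | ⟨hv1, hm⟩
    · -- sc(t1,t) = v : HALF then PARITY
      have hhalf := HALF t1 t hat1.le htb ht01 hz1 v hvodd.pos (sc_eq_max hm hvodd.pos)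
      have hge := mem_sc_le hhalf
      rw [← ht1def, ← ht2def] at hge
      have hle : sc y t2 t1 ≤ (v:ℕ∞) := le_trans (V_ge_sc _ _ _) (le_of_eq hVt1)
      have hsc : sc y t2 t1 = (v:ℕ∞) := le_antisymm hle hge
      have hpar := PAR t1 v ht1Ioo hz1 (by rw [← ht2def]; exact hyt2)
        (by rw [← ht2def]; exact hsc)
      exact hpar hvodd
    · -- sc(t1,t) = v - 1, an even number: mirror parity contradiction
      rcases Nat.eq_zero_or_pos (v-1) with h0 | h1case
      · -- v = 1 : y is one-signed on [t1,t], impossible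
        have h00 : sc y t1 t = 0 := by rw [hm, h0]; norm_num
        have hone := sc_zero_onesigned h00
        obtain ⟨x, hx, hxs⟩ := locR t1 (-(y t2)) t ht1Ioo hz1 hd ht01
        rcases hone with hpos | hneg
        · rcases lt_or_gt_of_ne hyt2 with h | h
          · have : y t < 0 := by nlinarith [hprod]
            linarith [hpos t ⟨ht01.le, le_rfl⟩]
          · have : y x < 0 := by nlinarith [hxs]
            linarith [hpos x ⟨hx.1.le, hx.2.le⟩]
        · rcases lt_or_gt_of_ne hyt2 with h | h
          · have : 0 < y x := by nlinarith [hxs]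
            linarith [hneg x ⟨hx.1.le, hx.2.le⟩]
          · have : 0 < y t := by nlinarith [hprod]
            linarith [hneg t ⟨ht01.le, le_rfl⟩]
      · have hmem := sc_eq_max hm h1case
        have hnot := sc_succ_notMem hm
        obtain ⟨σ, s, hσ, hpat⟩ := scSet_to_pat hmem h1case
        have hσ0 : σ ≠ 0 := by rcases hσ with h | h <;> rw [h] <;> norm_num
        have hbr := pat_band_right hpat hnot t ⟨(hpat.1 (v-1) le_rfl).2, le_rfl⟩
        have hbr' : 0 < y t * (σ * (-1)^(v-1)) :=
          lt_of_le_of_ne hbr (Ne.symm (mul_ne_zero hyt0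
            (mul_ne_zero hσ0 (pow_ne_zero _ (by norm_num)))))
        have hs0t1 : t1 < s 0 := by
          rcases lt_or_eq_of_le (hpat.1 0 (by omega)).1 with h | h
          · exact h
          · exfalso; have h2 := hpat.2.2 0 (by omega); rw [← h, hz1] at h2; simp at h2
        obtain ⟨x, hx, hxs⟩ := locR t1 (-(y t2)) (s 0) ht1Ioo hz1 hd hs0t1
        have hbl := pat_band_left hpat hnot x ⟨hx.1.le, hx.2.le⟩
        have hyx0 : y x ≠ 0 := by intro h; rw [h] at hxs; simp at hxs
        have hbl' : 0 < y x * σ := lt_of_le_of_ne hbl (Ne.symm (mul_ne_zero hyx0 hσ0))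
        have hσs : 0 < σ * (-(y t2)) := by
          by_contra hcon
          push_neg at hcon
          nlinarith [mul_pos hbl' hxs, mul_self_pos.2 hyx0]
        have hytσ : y t * σ < 0 := by
          by_contra hcon
          push_neg at hcon
          nlinarith [mul_pos hσs hprod, mul_self_pos.2 hyt2]
        have hev : Even (v-1) := by rcases hvodd with ⟨m2, hm2⟩; exact ⟨m2, by omega⟩
        rw [Even.neg_one_pow hev, mul_one] at hbr'
        linarith [hbr', hytσ]
  ------------------------------------------------------------------
  -- Assembly of the conclusion
  ------------------------------------------------------------------
  refine ⟨?_, ?_, ?_⟩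
  · by_cases h1 : y t1 = 0
    · left
      intro h0
      exact noD1 t ⟨ht01.le, le_rfl⟩ h0 (by rw [← ht1def]; exact h1)
    · right
      rw [hy_ode t htab, ← ht1def]
      have hct := hc_neg t htab
      nlinarith [mul_self_pos.2 h1]
  · by_cases h1 : y t1 = 0
    · right
      have hyt2 : y t2 ≠ 0 := fun h => noD1 t1 ⟨le_rfl, ht01.le⟩ h1 (by rw [← ht2def]; exact h)
      have hyt0 : y t ≠ 0 := fun h => noD1 t ⟨ht01.le, le_rfl⟩ h (by rw [← ht1def]; exact h1)
      have hprod : y t2 * y t < 0 := by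
        rcases lt_trichotomy (y t2 * y t) 0 with h | h | h
        · exact h
        · exact absurd h (mul_ne_zero hyt2 hyt0)
        · exact (noD2 h1 h).elim
      rw [hy_ode t1 ht1m, ← ht2def]
      have hct := hc_neg t1 ht1m
      nlinarith [hprod]
    · left; exact h1
  · intro s₁ hs₁ hs₁0
    have hs₁ab : s₁ ∈ Set.Icc a b := ⟨le_trans hat1.le hs₁.1, le_trans hs₁.2 htb⟩
    intro h'0
    have hzz : y (η s₁) = 0 := by
      have hc := hc_neg s₁ hs₁ab
      rw [hy_ode s₁ hs₁ab] at h'0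
      rcases mul_eq_zero.1 h'0 with h | h
      · linarith
      · exact h
    exact noD1 s₁ hs₁ hs₁0 hzz
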